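/- arXiv:2507.13777 — 6 statements merged into one kernel-verified Lean document; each statement's English description precedes it below -/
import Mathlib

section
/- If G is a finite simple connected graph with n(G) ≥ ω(G)+1 ≥ 4, then dim_{A,l}(G) ≤ ⌊((ω(G)−2)/(ω(G)−1))·n(G)⌋, where ω(G) is the clique number. -/
/-!
If every edge inside a vertex set `T` is separated by a vertex outside `T` (adjacent to exactly one
end), then `V \ T` is a local adjacency resolving set, so it suffices to find such a `T` with
`n ≤ (ω - 1) |T|`. It is assembled greedily: the remaining vertex set `A` is cut into chunks `X`
with representatives `R ⊆ X`, `|X| ≤ (ω - 1) |R|`, where the discarded vertices `X \ R` (with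
those discarded earlier) separate every edge from `R` to `R` or to what remains. A maximal clique
of `A` of size `< ω` is a chunk with one representative, since every other vertex of `A` misses
one of its vertices. An `ω`-clique needs two representatives, hence a vertex splitting it; so the
recursion keeps every `ω`-clique without neighbours in `A` split by a discarded vertex,
connectivity giving this at the start. To preserve it, chunks are built around an `ω`-clique `C`
with the fewest attachments `e` in `A`: `C` with all its attachments if `e ≤ ω - 2`, `C` with one
vertex and two representatives if `e ≥ 3`, and a short case analysis when `e = 2`.
-/

open SimpleGraph

variable {V : Type*} [Fintype V] [DecidableEq V]

/-- `S` is a local resolving set of `G`. -/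
def IsLocalResolving (G : SimpleGraph V) (S : Finset V) : Prop :=
  ∀ u v : V, G.Adj u v → u ∉ S → v ∉ S → ∃ w ∈ S, G.dist u w ≠ G.dist v w

/-- The local metric dimension of `G`. -/
noncomputable def dimL (G : SimpleGraph V) : ℕ :=
  sInf {k | ∃ S : Finset V, S.card = k ∧ IsLocalResolving G S}

/-- `S` is a local adjacency resolving set of `G`. -/
def IsLocalAdjResolving (G : SimpleGraph V) (S : Finset V) : Prop :=
  ∀ u v : V, G.Adj u v → u ∉ S → v ∉ S → ∃ w ∈ S, Xor' (G.Adj w u) (G.Adj w v)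

/-- The local adjacency metric dimension of `G`. -/
noncomputable def dimAL (G : SimpleGraph V) : ℕ :=
  sInf {k | ∃ S : Finset V, S.card = k ∧ IsLocalAdjResolving G S}

/-- `S` is a resolving set of `G`. -/
def IsResolving (G : SimpleGraph V) (S : Finset V) : Prop :=
  ∀ u v : V, u ≠ v → u ∉ S → v ∉ S → ∃ w ∈ S, G.dist u w ≠ G.dist v w

/-- The metric dimension of `G`. -/
noncomputable def dimM (G : SimpleGraph V) : ℕ :=
  sInf {k | ∃ S : Finset V, S.card = k ∧ IsResolving G S}

/-- `S` is an adjacency resolving set of `G`. -/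
def IsAdjResolving (G : SimpleGraph V) (S : Finset V) : Prop :=
  ∀ u v : V, u ≠ v → u ∉ S → v ∉ S → ∃ w ∈ S, Xor' (G.Adj w u) (G.Adj w v)

/-- The adjacency metric dimension of `G`. -/
noncomputable def dimA (G : SimpleGraph V) : ℕ :=
  sInf {k | ∃ S : Finset V, S.card = k ∧ IsAdjResolving G S}

lemma Finset.exists_mem_ne_ne {α : Type*} [DecidableEq α] {s : Finset α} (hs : 2 < s.card)
    (a b : α) : ∃ c ∈ s, c ≠ a ∧ c ≠ b := by
  obtain ⟨c, hc, hcab⟩ := Finset.exists_mem_notMem_of_card_lt_card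
    (lt_of_le_of_lt (Finset.card_le_two (a := a) (b := b)) hs)
  exact ⟨c, hc, by grind⟩

namespace SimpleGraph

lemma cliqueFree_cliqueNum_succ {V : Type*} [Finite V] (G : SimpleGraph V) :
    G.CliqueFree (G.cliqueNum + 1) := fun s hs => by
  have := hs.isClique.card_le_cliqueNum
  rw [hs.card_eq] at this
  omega

section Separation

variable {V : Type*} (G : SimpleGraph V)

def SeparatedBy (S : Finset V) (u v : V) : Prop :=
  ∃ w ∈ S, Xor (G.Adj w u) (G.Adj w v)

def SeparatesEdges (S P Q : Finset V) : Prop :=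
  ∀ u ∈ P, ∀ v ∈ Q, G.Adj u v → G.SeparatedBy S u v

variable {G} {S P Q : Finset V}

lemma SeparatedBy.mono {S' : Finset V} {u v : V} (h : G.SeparatedBy S u v) (hS : S ⊆ S') :
    G.SeparatedBy S' u v :=
  let ⟨w, hw, hxor⟩ := h
  ⟨w, hS hw, hxor⟩

lemma SeparatedBy.symm {u v : V} (h : G.SeparatedBy S u v) : G.SeparatedBy S v u :=
  let ⟨w, hw, hxor⟩ := h
  ⟨w, hw, xor_comm _ _ ▸ hxor⟩

namespace SeparatesEdges

lemma mono {S' P' Q' : Finset V} (h : G.SeparatesEdges S P Q) (hS : S ⊆ S') (hP : P' ⊆ P)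
    (hQ : Q' ⊆ Q) : G.SeparatesEdges S' P' Q' := fun u hu v hv huv =>
  (h u (hP hu) v (hQ hv) huv).mono hS

lemma symm (h : G.SeparatesEdges S P Q) : G.SeparatesEdges S Q P := fun u hu v hv huv =>
  (h v hv u hu huv.symm).symm

lemma union_left [DecidableEq V] {P' : Finset V} (h : G.SeparatesEdges S P Q)
    (h' : G.SeparatesEdges S P' Q) : G.SeparatesEdges S (P ∪ P') Q := by
  intro u hu
  rcases Finset.mem_union.1 hu with hu | hu
  exacts [h u hu, h' u hu]

lemma union_right [DecidableEq V] {Q' : Finset V} (h : G.SeparatesEdges S P Q)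
    (h' : G.SeparatesEdges S P Q') : G.SeparatesEdges S P (Q ∪ Q') :=
  (h.symm.union_left h'.symm).symm

end SeparatesEdges

lemma separatesEdges_pair_singleton [DecidableEq V] {α β z : V} :
    G.SeparatesEdges S {α, β} {z} ↔
      (G.Adj α z → G.SeparatedBy S α z) ∧ (G.Adj β z → G.SeparatedBy S β z) := by
  simp [SeparatesEdges]

lemma IsClique.separates {K : Finset V} (hK : G.IsClique (K : Set V)) {s c x : V} (hs : s ∈ K)
    (hc : c ∈ K) (hxs : G.Adj x s) (hxc : ¬ G.Adj x c) :
    c ≠ s ∧ Xor (G.Adj c s) (G.Adj c x) := by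
  have hcs : c ≠ s := by rintro rfl; exact hxc hxs
  exact ⟨hcs, Or.inl ⟨hK hc hs hcs, fun h => hxc h.symm⟩⟩

end Separation

section Chunks

variable {V : Type*} [DecidableEq V] (G : SimpleGraph V) (ω : ℕ)

open Classical in
noncomputable def attachment (A C : Finset V) : Finset V :=
  (A \ C).filter fun x => ∃ c ∈ C, G.Adj x c

def Splits (y : V) (C : Finset V) : Prop :=
  (∃ c ∈ C, G.Adj y c) ∧ ∃ c ∈ C, ¬ G.Adj y c

def IsolatedCliquesSplit (A Y : Finset V) : Prop :=
  ∀ C ⊆ A, G.IsNClique ω C → G.attachment A C = ∅ → ∃ y ∈ Y, G.Splits y C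

def HasLargeResolvedPart (A Y : Finset V) : Prop :=
  ∃ T ⊆ A, A.card ≤ (ω - 1) * T.card ∧ G.SeparatesEdges (A \ T ∪ Y) T T

structure IsChunk (A Y X R : Finset V) : Prop where
  subset : X ⊆ A
  nonempty : X.Nonempty
  reps_subset : R ⊆ X
  card_le : X.card ≤ (ω - 1) * R.card
  separates_reps : G.SeparatesEdges (X \ R ∪ Y) R R
  separates_rest : G.SeparatesEdges (X \ R ∪ Y) R (A \ X)
  -- hence an `ω`-clique cut off by `X` is split by a vertex of `X \ R` unless it was isolated
  attachment_eq_empty :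
    ∀ C ⊆ A \ X, G.IsNClique ω C → G.attachment A C ⊆ R → G.attachment A C = ∅

variable {G ω} {A C X R Y : Finset V}

@[simp]
lemma mem_attachment {x : V} :
    x ∈ G.attachment A C ↔ x ∈ A ∧ x ∉ C ∧ ∃ c ∈ C, G.Adj x c := by
  classical
  simp [attachment, and_assoc]

lemma exists_mem_attachment_of_mem_attachment {C' : Finset V} (hC' : C' ⊆ A \ C) {x : V}
    (hx : x ∈ G.attachment A C') (hxC : x ∈ C) : ∃ c' ∈ C', c' ∈ G.attachment A C := by
  obtain ⟨-, -, c', hc', hxc'⟩ := mem_attachment.1 hx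
  have := hC' hc'
  exact ⟨c', hc', by grind [mem_attachment, G.adj_symm hxc']⟩

lemma attachment_subset_of_attachment_sdiff_eq_empty (h : G.attachment (A \ X) C = ∅) :
    G.attachment A C ⊆ X := by
  intro x hx
  by_contra hxX
  obtain ⟨hxA, hxC, hadj⟩ := mem_attachment.1 hx
  have : x ∈ G.attachment (A \ X) C := mem_attachment.2 ⟨by grind, hxC, hadj⟩
  simp_all

lemma attachment_eq_empty_of_subset {C' : Finset V} (hC' : C' ⊆ A \ X)
    (hCX : C ∪ G.attachment A C ⊆ X) (h : G.attachment A C' ⊆ C) : G.attachment A C' = ∅ := by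
  refine Finset.eq_empty_of_forall_notMem fun x hx => ?_
  obtain ⟨c', hc', hc'att⟩ :=
    exists_mem_attachment_of_mem_attachment (hC'.trans (by grind)) hx (h hx)
  grind

lemma mem_of_adj_of_attachment_subset {C' : Finset V} (hC' : C' ⊆ A \ C)
    (hatt : G.attachment A C' ⊆ C) {c v : V} (hc : c ∈ C') (hcC : c ∉ G.attachment A C)
    (hv : v ∈ A) (hcv : G.Adj c v) : v ∈ C' := by
  by_contra hvC'
  have hvC : v ∈ C := hatt (mem_attachment.2 ⟨hv, hvC', c, hc, hcv.symm⟩)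
  exact hcC (mem_attachment.2 ⟨by grind, by grind, v, hvC, hcv⟩)

lemma IsNClique.exists_not_adj (hfree : G.CliqueFree (ω + 1)) (hC : G.IsNClique ω C) (x : V) :
    ∃ c ∈ C, ¬ G.Adj x c := by
  by_contra! h
  exact hfree _ (hC.insert h)

lemma IsNClique.exists_not_adj_ne (hfree : G.CliqueFree (ω + 1)) (hC : G.IsNClique ω C) {v : V}
    (hns : ∀ o ∈ C, ¬ G.Adj v o → ∃ c ∈ C, c ≠ o ∧ ¬ G.Adj v c) (o : V) :
    ∃ c ∈ C, c ≠ o ∧ ¬ G.Adj v c := by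
  obtain ⟨c, hc, hvc⟩ := hC.exists_not_adj hfree v
  obtain rfl | hco := eq_or_ne c o
  exacts [hns c hc hvc, ⟨c, hc, hco, hvc⟩]

lemma IsNClique.splits (hfree : G.CliqueFree (ω + 1)) (hC : G.IsNClique ω C) {x : V}
    (hadj : ∃ c ∈ C, G.Adj x c) : G.Splits x C :=
  ⟨hadj, hC.exists_not_adj hfree x⟩

lemma not_attachment_subset_of_card_lt {k : ℕ}
    (hk : ∀ C ⊆ A, G.IsNClique ω C → k ≤ (G.attachment A C).card) (hC : C ⊆ A)
    (hCω : G.IsNClique ω C) (hR : R.card < k) : ¬ G.attachment A C ⊆ R := fun h => by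
  have := Finset.card_le_card h
  have := hk C hC hCω
  omega

lemma IsChunk.hasLargeResolvedPart (hX : G.IsChunk ω A Y X R)
    (h : G.HasLargeResolvedPart ω (A \ X) (Y ∪ (X \ R))) : G.HasLargeResolvedPart ω A Y := by
  obtain ⟨T, hTA, hcard, hsep⟩ := h
  have hXA := hX.subset
  have hRX := hX.reps_subset
  have hdisj : Disjoint R T := Finset.disjoint_left.2 fun a haR haT => by grind
  refine ⟨R ∪ T, by grind, ?_, ?_⟩
  · have := hX.card_le
    have := Finset.card_sdiff_add_card_eq_card hXA
    rw [Finset.card_union_of_disjoint hdisj, mul_add]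
    omega
  · have hS₁ : X \ R ∪ Y ⊆ A \ (R ∪ T) ∪ Y := by grind
    have hS₂ : (A \ X) \ T ∪ (Y ∪ (X \ R)) ⊆ A \ (R ∪ T) ∪ Y := by grind
    have hRT : G.SeparatesEdges (A \ (R ∪ T) ∪ Y) R T := hX.separates_rest.mono hS₁ le_rfl hTA
    exact ((hX.separates_reps.mono hS₁ le_rfl le_rfl).union_right hRT).union_left
      (hRT.symm.union_right (hsep.mono hS₂ le_rfl le_rfl))

lemma IsolatedCliquesSplit.sdiff (hInv : G.IsolatedCliquesSplit ω A Y)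
    (hfree : G.CliqueFree (ω + 1)) (hX : G.IsChunk ω A Y X R) :
    G.IsolatedCliquesSplit ω (A \ X) (Y ∪ (X \ R)) := by
  intro C hC hCω hiso
  by_cases hattR : G.attachment A C ⊆ R
  · obtain ⟨y, hy, hsplit⟩ :=
      hInv C (hC.trans Finset.sdiff_subset) hCω (hX.attachment_eq_empty C hC hCω hattR)
    exact ⟨y, Finset.mem_union_left _ hy, hsplit⟩
  · obtain ⟨x, hx, hxR⟩ := Finset.not_subset.1 hattR
    have hxX := attachment_subset_of_attachment_sdiff_eq_empty hiso hx
    obtain ⟨-, -, hadj⟩ := mem_attachment.1 hx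
    exact ⟨x, by grind, hCω.splits hfree hadj⟩

lemma exists_maximal_clique_subset (hA : A.Nonempty) : ∃ W ⊆ A, W.Nonempty ∧
    G.IsClique (W : Set V) ∧ ∀ x ∈ A \ W, ∃ w ∈ W, ¬ G.Adj x w := by
  classical
  obtain ⟨a, ha⟩ := hA
  obtain ⟨W, hW, hmax⟩ := Finset.exists_max_image
    (A.powerset.filter fun W : Finset V => W.Nonempty ∧ G.IsClique (W : Set V)) Finset.card
    ⟨{a}, by simp [ha]⟩
  simp only [Finset.mem_filter, Finset.mem_powerset] at hW hmax
  refine ⟨W, hW.1, hW.2.1, hW.2.2, fun x hx => ?_⟩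
  by_contra! hadj
  have hxW : x ∉ W := (Finset.mem_sdiff.1 hx).2
  have := hmax (insert x W) ⟨Finset.insert_subset (by grind) hW.1, Finset.insert_nonempty _ _,
    by simpa using hW.2.2.insert fun b hb _ => hadj b hb⟩
  rw [Finset.card_insert_of_notMem hxW] at this
  omega

lemma exists_isChunk_of_forall_not_isNClique (hA : A.Nonempty)
    (hno : ∀ C ⊆ A, ¬ G.IsNClique ω C) : ∃ X R, G.IsChunk ω A Y X R := by
  obtain ⟨W, hWA, ⟨t, ht⟩, hW, hmax⟩ := exists_maximal_clique_subset (G := G) hA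
  have hcard : W.card < ω := by
    by_contra! h
    obtain ⟨C, hCW, hC⟩ := Finset.exists_subset_card_eq h
    exact hno C (hCW.trans hWA) ⟨hW.subset (by simpa using hCW), hC⟩
  refine ⟨W, {t}, ⟨hWA, ⟨t, ht⟩, by simpa using ht, by rw [Finset.card_singleton]; omega,
    ?_, ?_, ?_⟩⟩
  · intro u hu v hv huv
    simp only [Finset.mem_singleton] at hu hv
    exact absurd (hu.trans hv.symm) huv.ne
  · intro u hu x hx hux
    obtain rfl := Finset.mem_singleton.1 hu
    obtain ⟨w, hw, hxw⟩ := hmax x hx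
    obtain ⟨hwu, hxor⟩ := hW.separates ht hw hux.symm hxw
    exact ⟨w, by simp [hw, hwu], hxor⟩
  · exact fun C hC hCω => absurd hCω (hno C (hC.trans Finset.sdiff_subset))

lemma exists_isChunk_of_attachment_eq_empty (hω : 2 ≤ ω) (hC : C ⊆ A) (hCω : G.IsNClique ω C)
    (hiso : G.attachment A C = ∅) {y : V} (hy : y ∈ Y) (hsplit : G.Splits y C) :
    ∃ R, G.IsChunk ω A Y C R := by
  obtain ⟨⟨d₁, hd₁, h₁⟩, ⟨d₂, hd₂, h₂⟩⟩ := hsplit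
  have hd : d₁ ≠ d₂ := by rintro rfl; exact h₂ h₁
  refine ⟨{d₁, d₂}, hC, ⟨d₁, hd₁⟩, by grind, ?_, ?_, ?_, ?_⟩
  · rw [Finset.card_pair hd, hCω.card_eq]; omega
  · intro u hu v hv huv
    exact ⟨y, by simp [hy], by grind [G.ne_of_adj huv]⟩
  · intro u hu v hv huv
    have : v ∈ G.attachment A C := mem_attachment.2 ⟨by grind, by grind, u, by grind, huv.symm⟩
    simp [hiso] at this
  · exact fun C' hC' _ hsub =>
      attachment_eq_empty_of_subset (C := C) hC' (by simp [hiso]) (hsub.trans (by grind))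

lemma exists_isChunk_union_attachment (hfree : G.CliqueFree (ω + 1)) (hC : C ⊆ A)
    (hCω : G.IsNClique ω C) (hne : (G.attachment A C).Nonempty)
    (hcard : (G.attachment A C).card ≤ ω - 2) :
    ∃ R, G.IsChunk ω A Y (C ∪ G.attachment A C) R := by
  obtain ⟨u, hu⟩ := hne
  obtain ⟨huA, huC, t, ht, hut⟩ := mem_attachment.1 hu
  obtain ⟨t', ht', hut'⟩ := hCω.exists_not_adj hfree u
  have htt' : t ≠ t' := by rintro rfl; exact hut' hut
  have hattA : G.attachment A C ⊆ A := fun x hx => (mem_attachment.1 hx).1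
  refine ⟨{t, t'}, Finset.union_subset hC hattA, ⟨t, by simp [ht]⟩, by grind, ?_, ?_, ?_, ?_⟩
  · have hdisj : Disjoint C (G.attachment A C) :=
      Finset.disjoint_right.2 fun x hx => (mem_attachment.1 hx).2.1
    rw [Finset.card_union_of_disjoint hdisj, Finset.card_pair htt', hCω.card_eq]
    have := Finset.card_pos.2 ⟨u, hu⟩
    omega
  · intro a ha b hb hab
    exact ⟨u, by grind, by grind [G.ne_of_adj hab]⟩
  · intro a ha x hx hax
    have : x ∈ G.attachment A C := mem_attachment.2 ⟨by grind, by grind, a, by grind, hax.symm⟩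
    grind
  · exact fun C' hC' _ hsub => attachment_eq_empty_of_subset hC' le_rfl (hsub.trans (by grind))

lemma isChunk_insert_of_adj_erase (hfree : G.CliqueFree (ω + 1)) (hω : 3 ≤ ω) (hC : C ⊆ A)
    (hCω : G.IsNClique ω C) (h3 : ∀ C' ⊆ A, G.IsNClique ω C' → 3 ≤ (G.attachment A C').card)
    {t x : V} (ht : t ∈ C) (hx : x ∈ A \ C) (hxt : ¬ G.Adj x t)
    (hxC : ∀ c ∈ C, c ≠ t → G.Adj x c) :
    G.IsChunk ω A Y (insert x C) {t, x} := by
  have hxC' : x ∉ C := (Finset.mem_sdiff.1 hx).2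
  have htx : t ≠ x := by rintro rfl; exact hxC' ht
  refine ⟨Finset.insert_subset (by grind) hC, Finset.insert_nonempty _ _, by grind, ?_, ?_, ?_, ?_⟩
  · rw [Finset.card_insert_of_notMem hxC', hCω.card_eq, Finset.card_pair htx]; omega
  · intro u hu v hv huv
    have := G.ne_of_adj huv
    grind [G.adj_symm huv]
  · intro s hs v hv hsv
    simp only [Finset.mem_insert, Finset.mem_singleton] at hs
    obtain rfl | rfl := hs
    · obtain ⟨c, hc, hvc⟩ := hCω.exists_not_adj hfree v
      obtain ⟨hcs, hxor⟩ := hCω.isClique.separates ht hc hsv.symm hvc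
      exact ⟨c, by grind, hxor⟩
    · have hK : G.IsNClique ω (insert s (C.erase t)) :=
        hCω.insert_erase (fun w hw => hxC w (by grind) (by grind)) ht
      obtain ⟨c, hc, hvc⟩ := hK.exists_not_adj hfree v
      obtain ⟨hcs, hxor⟩ := hK.isClique.separates (Finset.mem_insert_self _ _) hc hsv.symm hvc
      exact ⟨c, by grind, hxor⟩
  · exact fun C' hC' hC'ω hsub => absurd hsub <| not_attachment_subset_of_card_lt h3
      (hC'.trans Finset.sdiff_subset) hC'ω (Finset.card_le_two.trans_lt (by norm_num))

lemma isChunk_insert_of_two_not_adj (hfree : G.CliqueFree (ω + 1)) (hω : 3 ≤ ω)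
    (hC : C ⊆ A) (hCω : G.IsNClique ω C)
    (h3 : ∀ C' ⊆ A, G.IsNClique ω C' → 3 ≤ (G.attachment A C').card)
    (hns : ∀ x ∈ A \ C, ∀ o ∈ C, ¬ G.Adj x o → ∃ c ∈ C, c ≠ o ∧ ¬ G.Adj x c)
    {u t t' : V} (hu : u ∈ G.attachment A C) (ht : t ∈ C) (ht' : t' ∈ C) (hut : G.Adj u t)
    (hut' : ¬ G.Adj u t') :
    G.IsChunk ω A Y (insert u C) {t, t'} := by
  obtain ⟨huA, huC, -⟩ := mem_attachment.1 hu
  have htt' : t ≠ t' := by rintro rfl; exact hut' hut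
  refine ⟨Finset.insert_subset huA hC, Finset.insert_nonempty _ _, by grind, ?_, ?_, ?_, ?_⟩
  · rw [Finset.card_insert_of_notMem huC, hCω.card_eq, Finset.card_pair htt']; omega
  · intro a ha b hb hab
    exact ⟨u, by grind, by grind [G.ne_of_adj hab]⟩
  · intro s hs v hv hsv
    have hnsv := hns v (by grind)
    simp only [Finset.mem_insert, Finset.mem_singleton] at hs
    -- `c` avoids the other representative, and `s` because `v` is adjacent to `s`
    obtain ⟨c, hc, hco, hvc⟩ := hCω.exists_not_adj_ne hfree hnsv (if s = t then t' else t)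
    obtain ⟨hcs, hxor⟩ := hCω.isClique.separates (by grind) hc hsv.symm hvc
    exact ⟨c, by grind, hxor⟩
  · exact fun C' hC' hC'ω hsub => absurd hsub <| not_attachment_subset_of_card_lt h3
      (hC'.trans Finset.sdiff_subset) hC'ω (Finset.card_le_two.trans_lt (by norm_num))

lemma exists_isChunk_of_three_le_card_attachment (hfree : G.CliqueFree (ω + 1)) (hω : 3 ≤ ω)
    (hC : C ⊆ A) (hCω : G.IsNClique ω C)
    (h3 : ∀ C' ⊆ A, G.IsNClique ω C' → 3 ≤ (G.attachment A C').card) :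
    ∃ X R, G.IsChunk ω A Y X R := by
  by_cases hswap : ∃ t ∈ C, ∃ x ∈ A \ C, ¬ G.Adj x t ∧ ∀ c ∈ C, c ≠ t → G.Adj x c
  · obtain ⟨t, ht, x, hx, hxt, hxC⟩ := hswap
    exact ⟨_, _, isChunk_insert_of_adj_erase hfree hω hC hCω h3 ht hx hxt hxC⟩
  · push Not at hswap
    obtain ⟨u, hu⟩ : (G.attachment A C).Nonempty :=
      Finset.card_pos.1 (by have := h3 C hC hCω; omega)
    obtain ⟨-, -, t, ht, hut⟩ := mem_attachment.1 hu
    obtain ⟨t', ht', hut'⟩ := hCω.exists_not_adj hfree u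
    exact ⟨_, _, isChunk_insert_of_two_not_adj hfree hω hC hCω h3
      (fun x hx o ho hxo => hswap o ho x hx hxo) hu ht ht' hut hut'⟩

lemma exists_isChunk_of_pendant (hω : 3 ≤ ω) {K : Finset V} (hK : K ⊆ A) (hKω : G.IsNClique ω K)
    {z : V} (hz : z ∈ K) (hpend : ∀ c ∈ K, c ≠ z → ∀ v ∈ A, G.Adj c v → v ∈ K)
    (h2 : ∀ C ⊆ A, G.IsNClique ω C → 2 ≤ (G.attachment A C).card) :
    ∃ X R, G.IsChunk ω A Y X R := by
  obtain ⟨ζ, hζ⟩ : (G.attachment A K).Nonempty :=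
    Finset.card_pos.1 (by have := h2 K hK hKω; omega)
  obtain ⟨hζA, hζK, c, hc, hζc⟩ := mem_attachment.1 hζ
  have hζz : G.Adj ζ z := by
    obtain rfl | hcz := eq_or_ne c z
    exacts [hζc, absurd (hpend c hc hcz ζ hζA hζc.symm) hζK]
  obtain ⟨c', hc', hc'z⟩ := K.exists_mem_ne (by rw [hKω.card_eq]; omega) z
  obtain ⟨c'', hc'', hc''z, hc''c'⟩ := K.exists_mem_ne_ne (by rw [hKω.card_eq]; omega) z c'
  have hζc' : ¬ G.Adj ζ c' := fun h => hζK (hpend c' hc' hc'z ζ hζA h.symm)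
  refine ⟨insert ζ K, {z, c'}, Finset.insert_subset hζA hK, Finset.insert_nonempty _ _,
    by grind, ?_, ?_, ?_, ?_⟩
  · rw [Finset.card_insert_of_notMem hζK, hKω.card_eq, Finset.card_pair hc'z.symm]; omega
  · intro u hu v hv huv
    exact ⟨ζ, by grind, by grind [G.ne_of_adj huv]⟩
  · intro s hs v hv hsv
    simp only [Finset.mem_insert, Finset.mem_singleton] at hs
    rcases hs with rfl | rfl
    · exact ⟨c'', by grind, Or.inl ⟨hKω.isClique hc'' hz hc''z,
        fun h => (Finset.mem_sdiff.1 hv).2 (by grind)⟩⟩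
    · exact absurd (hpend s hc' hc'z v (by grind) hsv) (by grind)
  · intro C hC hCω hsub
    have hsubz : G.attachment A C ⊆ {z} := by
      intro x hx
      obtain ⟨-, -, d, hd, hxd⟩ := mem_attachment.1 hx
      have := hsub hx
      simp only [Finset.mem_insert, Finset.mem_singleton] at this ⊢
      rcases this with rfl | rfl
      · rfl
      · exact absurd (hpend x hc' hc'z d (by grind) hxd) (by grind)
    exact absurd hsubz (not_attachment_subset_of_card_lt h2 (hC.trans Finset.sdiff_subset) hCω
      (by simp))

lemma isChunk_insert_of_attachment_eq_pair (hω : 3 ≤ ω) (hC : C ⊆ A) (hCω : G.IsNClique ω C)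
    {y z α β : V} (hE : G.attachment A C = {y, z})
    (hnb : ∀ C' ⊆ A \ insert y C, G.IsNClique ω C' → z ∈ C' → ¬ G.attachment A C' ⊆ C)
    (hα : α ∈ C) (hβ : β ∈ C) (hyα : G.Adj y α) (hyβ : ¬ G.Adj y β)
    (hsep : G.SeparatesEdges (insert y C \ {α, β}) {α, β} {z}) :
    G.IsChunk ω A Y (insert y C) {α, β} := by
  have hy : y ∈ G.attachment A C := by simp [hE]
  obtain ⟨hyA, hyC, -⟩ := mem_attachment.1 hy
  have hαβ : α ≠ β := by rintro rfl; exact hyβ hyα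
  refine ⟨Finset.insert_subset hyA hC, Finset.insert_nonempty _ _, by grind, ?_, ?_, ?_, ?_⟩
  · rw [Finset.card_insert_of_notMem hyC, hCω.card_eq, Finset.card_pair hαβ]; omega
  · intro a ha b hb hab
    exact ⟨y, by grind, by grind [G.ne_of_adj hab]⟩
  · intro s hs v hv hsv
    have : v ∈ G.attachment A C := mem_attachment.2 ⟨by grind, by grind, s, by grind, hsv.symm⟩
    obtain rfl : v = z := by grind
    exact (hsep s hs v (Finset.mem_singleton_self v) hsv).mono (by grind)
  · intro C' hC' hC'ω hsub
    refine Finset.eq_empty_of_forall_notMem fun x hx => ?_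
    obtain ⟨c', hc', hc'att⟩ :=
      exists_mem_attachment_of_mem_attachment (C := C) (hC'.trans (by grind)) hx (by grind)
    have : c' = z := by grind
    exact hnb C' hC' hC'ω (this ▸ hc') (hsub.trans (by grind))

lemma exists_pair_separatesEdges (hfree : G.CliqueFree (ω + 1)) (hω : 3 ≤ ω)
    (hCω : G.IsNClique ω C) {y z : V} (hy : y ∉ C) (hyC : ∃ c ∈ C, G.Adj y c)
    (hzC : ∃ c ∈ C, G.Adj z c) :
    (∃ α ∈ C, ∃ β ∈ C, G.Adj y α ∧ ¬ G.Adj y β ∧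
      G.SeparatesEdges (insert y C \ {α, β}) {α, β} {z}) ∨
    (∃ α ∈ C, ∃ β ∈ C, G.Adj z α ∧ ¬ G.Adj z β ∧
      G.SeparatesEdges (insert z C \ {α, β}) {α, β} {y}) := by
  obtain ⟨a, ha, hza⟩ := hCω.exists_not_adj hfree z
  obtain ⟨b, hb, hyb⟩ := hCω.exists_not_adj hfree y
  have hsepa : ∀ s ∈ C, s ≠ a → ∀ S : Finset V, a ∈ S → G.SeparatedBy S s z :=
    fun s hs hsa S haS => ⟨a, haS, Or.inl ⟨hCω.isClique ha hs hsa.symm, fun h => hza h.symm⟩⟩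
  by_cases hgen : (∃ α ∈ C, G.Adj y α ∧ α ≠ a) ∧ ∃ β ∈ C, ¬ G.Adj y β ∧ β ≠ a
  · obtain ⟨⟨α, hα, hyα, hαa⟩, β, hβ, hyβ, hβa⟩ := hgen
    exact Or.inl ⟨α, hα, β, hβ, hyα, hyβ, separatesEdges_pair_singleton.2
      ⟨fun _ => hsepa α hα hαa _ (by grind), fun _ => hsepa β hβ hβa _ (by grind)⟩⟩
  rcases not_and_or.1 hgen with hNy | hNy <;> push Not at hNy
  · obtain ⟨c, hc, hyc⟩ := hyC
    obtain rfl := hNy c hc hyc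
    by_cases hyz : G.Adj y z
    · refine Or.inl ⟨c, hc, b, hb, hyc, hyb, separatesEdges_pair_singleton.2
        ⟨fun h => absurd h.symm hza, fun _ => ⟨y, by grind, Or.inr ⟨hyz, hyb⟩⟩⟩⟩
    · obtain ⟨d, hd, hzd⟩ := hzC
      obtain ⟨g, hg, hgd, hgc⟩ := C.exists_mem_ne_ne (by rw [hCω.card_eq]; omega) d c
      refine Or.inr ⟨d, hd, c, hc, hzd, hza, separatesEdges_pair_singleton.2
        ⟨fun h => absurd (hNy d hd h.symm) (by grind), fun _ => ⟨g, by grind,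
          Or.inl ⟨hCω.isClique hg hc hgc, fun h => hgc (hNy g hg h.symm)⟩⟩⟩⟩
  · obtain rfl := hNy b hb hyb
    by_cases hdiff : ∃ α ∈ C, G.Adj y α ∧ ¬ G.Adj z α
    · obtain ⟨α, hα, hyα, hzα⟩ := hdiff
      exact Or.inl ⟨α, hα, b, hb, hyα, hyb, separatesEdges_pair_singleton.2
        ⟨fun h => absurd h.symm hzα, fun h => absurd h.symm hza⟩⟩
    push Not at hdiff
    obtain ⟨c, hc, hyc⟩ := hyC
    by_cases hyz : G.Adj y z
    · exfalso
      have hK := ((hCω.erase_of_mem hb).insert (a := z) fun w hw =>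
        hdiff w (by grind) (by grind)).insert (a := y) fun w hw => by grind
      exact hfree _ (by rwa [show ω - 1 + 1 + 1 = ω + 1 by omega] at hK)
    · exact Or.inl ⟨c, hc, b, hb, hyc, hyb, separatesEdges_pair_singleton.2
        ⟨fun _ => ⟨y, by grind, Or.inl ⟨hyc, hyz⟩⟩, fun h => absurd h.symm hza⟩⟩

lemma exists_isChunk_of_attachment_eq_pair (hfree : G.CliqueFree (ω + 1)) (hω : 3 ≤ ω)
    (hC : C ⊆ A) (hCω : G.IsNClique ω C) {y z : V} (hE : G.attachment A C = {y, z})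
    (h2 : ∀ C' ⊆ A, G.IsNClique ω C' → 2 ≤ (G.attachment A C').card) :
    ∃ X R, G.IsChunk ω A Y X R := by
  have hE' : G.attachment A C = {z, y} := by rw [hE, Finset.pair_comm]
  by_cases hbz : ∃ C' ⊆ A \ insert y C, G.IsNClique ω C' ∧ z ∈ C' ∧ G.attachment A C' ⊆ C
  · obtain ⟨C', hC', hC'ω, hz, hatt⟩ := hbz
    exact exists_isChunk_of_pendant hω (hC'.trans Finset.sdiff_subset) hC'ω hz
      (fun c hc hcz v hv hcv => mem_of_adj_of_attachment_subset (hC'.trans (by grind)) hatt hc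
        (by rw [hE]; grind) hv hcv) h2
  by_cases hby : ∃ C' ⊆ A \ insert z C, G.IsNClique ω C' ∧ y ∈ C' ∧ G.attachment A C' ⊆ C
  · obtain ⟨C', hC', hC'ω, hy, hatt⟩ := hby
    exact exists_isChunk_of_pendant hω (hC'.trans Finset.sdiff_subset) hC'ω hy
      (fun c hc hcy v hv hcv => mem_of_adj_of_attachment_subset (hC'.trans (by grind)) hatt hc
        (by rw [hE']; grind) hv hcv) h2
  push Not at hbz hby
  have hy : y ∈ G.attachment A C := by simp [hE]
  have hz : z ∈ G.attachment A C := by simp [hE]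
  rcases exists_pair_separatesEdges hfree hω hCω (mem_attachment.1 hy).2.1
    (mem_attachment.1 hy).2.2 (mem_attachment.1 hz).2.2 with
    ⟨α, hα, β, hβ, hyα, hyβ, hsep⟩ | ⟨α, hα, β, hβ, hzα, hzβ, hsep⟩
  · exact ⟨_, _, isChunk_insert_of_attachment_eq_pair hω hC hCω hE hbz hα hβ hyα hyβ hsep⟩
  · exact ⟨_, _, isChunk_insert_of_attachment_eq_pair hω hC hCω hE' hby hα hβ hzα hzβ hsep⟩

lemma exists_isChunk (hfree : G.CliqueFree (ω + 1)) (hω : 3 ≤ ω)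
    (hInv : G.IsolatedCliquesSplit ω A Y) (hA : A.Nonempty) : ∃ X R, G.IsChunk ω A Y X R := by
  classical
  by_cases hK : ∃ C ⊆ A, G.IsNClique ω C
  swap
  · exact exists_isChunk_of_forall_not_isNClique hA fun C hC hCω => hK ⟨C, hC, hCω⟩
  by_cases hiso : ∃ C ⊆ A, G.IsNClique ω C ∧ G.attachment A C = ∅
  · obtain ⟨C, hC, hCω, hCiso⟩ := hiso
    obtain ⟨y, hy, hsplit⟩ := hInv C hC hCω hCiso
    exact ⟨C, exists_isChunk_of_attachment_eq_empty (by omega) hC hCω hCiso hy hsplit⟩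
  push Not at hiso
  obtain ⟨C₀, hC₀, hC₀ω⟩ := hK
  obtain ⟨C, hC, hmin⟩ := Finset.exists_min_image (A.powerset.filter (G.IsNClique ω))
    (fun C => (G.attachment A C).card) ⟨C₀, by simpa using ⟨hC₀, hC₀ω⟩⟩
  simp only [Finset.mem_filter, Finset.mem_powerset, and_imp] at hC hmin
  obtain ⟨hCA, hCω⟩ := hC
  have hne := hiso C hCA hCω
  have hpos := Finset.card_pos.2 hne
  by_cases hsmall : (G.attachment A C).card ≤ ω - 2
  · exact ⟨_, exists_isChunk_union_attachment hfree hCA hCω hne hsmall⟩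
  obtain h2 | h3 : (G.attachment A C).card = 2 ∨ 3 ≤ (G.attachment A C).card := by omega
  · obtain ⟨y, z, -, hE⟩ := Finset.card_eq_two.1 h2
    exact exists_isChunk_of_attachment_eq_pair hfree hω hCA hCω hE
      fun C' hC' hC'ω => h2 ▸ hmin C' hC' hC'ω
  · exact exists_isChunk_of_three_le_card_attachment hfree hω hCA hCω
      fun C' hC' hC'ω => h3.trans (hmin C' hC' hC'ω)

theorem IsolatedCliquesSplit.hasLargeResolvedPart (hInv : G.IsolatedCliquesSplit ω A Y)
    (hfree : G.CliqueFree (ω + 1)) (hω : 3 ≤ ω) : G.HasLargeResolvedPart ω A Y := by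
  induction hn : A.card using Nat.strong_induction_on generalizing A Y with
  | _ n ih =>
  obtain rfl | hA := A.eq_empty_or_nonempty
  · exact ⟨∅, by simp, by simp, by simp [SeparatesEdges]⟩
  obtain ⟨X, R, hX⟩ := exists_isChunk hfree hω hInv hA
  have hlt : (A \ X).card < n :=
    hn ▸ Finset.card_lt_card (Finset.sdiff_ssubset hX.subset hX.nonempty)
  exact hX.hasLargeResolvedPart (ih _ hlt (hInv.sdiff hfree hX) rfl)

lemma isolatedCliquesSplit_univ [Fintype V] (hc : G.Connected) (hω₀ : 0 < ω)
    (hω : ω < Fintype.card V) : G.IsolatedCliquesSplit ω Finset.univ ∅ := by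
  intro C _ hCω hiso
  exfalso
  obtain ⟨c, hcC⟩ := Finset.card_pos.1 (hCω.card_eq ▸ hω₀)
  obtain ⟨v, -, hv⟩ := Finset.exists_mem_notMem_of_card_lt_card
    (hCω.card_eq ▸ Finset.card_univ (α := V) ▸ hω)
  obtain ⟨p⟩ := hc.preconnected c v
  obtain ⟨d, -, hd₁, hd₂⟩ := p.exists_boundary_dart (C : Set V) hcC hv
  have : d.snd ∈ G.attachment Finset.univ C :=
    mem_attachment.2 ⟨Finset.mem_univ _, hd₂, d.fst, hd₁, d.adj.symm⟩
  simp [hiso] at this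

lemma dimAL_le_card_sub [Fintype V] {T : Finset V}
    (hT : G.SeparatesEdges (Finset.univ \ T) T T) : dimAL G ≤ Fintype.card V - T.card := by
  refine Nat.sInf_le ⟨Finset.univ \ T, by simp [Finset.card_sdiff], ?_⟩
  intro u v huv hu hv
  exact hT u (by simpa using hu) v (by simpa using hv) huv

end Chunks

end SimpleGraph

lemma Nat.cast_sub_le_floor_mul {n t ω : ℕ} (hω : 2 ≤ ω) (ht : t ≤ n) (h : n ≤ (ω - 1) * t) :
    ((n - t : ℕ) : ℤ) ≤ ⌊((ω : ℚ) - 2) / ((ω : ℚ) - 1) * n⌋ := by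
  have hω' : (0 : ℚ) < ω - 1 := by
    have : (2 : ℚ) ≤ ω := by exact_mod_cast hω
    linarith
  have hQ : (n : ℚ) ≤ (ω - 1) * t := by
    have := (Nat.cast_le (α := ℚ)).2 h
    rwa [Nat.cast_mul, Nat.cast_sub (by omega), Nat.cast_one] at this
  rw [Int.le_floor, div_mul_eq_mul_div, le_div_iff₀ hω']
  push_cast [ht]
  nlinarith

theorem dimAL_le_floor (G : SimpleGraph V) (hc : G.Connected)
    (h1 : G.cliqueNum + 1 ≤ Fintype.card V) (h2 : 4 ≤ G.cliqueNum + 1) :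
    (dimAL G : ℤ) ≤
      ⌊(((G.cliqueNum : ℚ) - 2) / ((G.cliqueNum : ℚ) - 1)) * (Fintype.card V : ℚ)⌋ := by
  have hInv := isolatedCliquesSplit_univ (ω := G.cliqueNum) hc (by omega) (by omega)
  obtain ⟨T, -, hcard, hsep⟩ := hInv.hasLargeResolvedPart G.cliqueFree_cliqueNum_succ (by omega)
  calc (dimAL G : ℤ) ≤ ((Fintype.card V - T.card : ℕ) : ℤ) := by
        exact_mod_cast dimAL_le_card_sub (by simpa using hsep)
    _ ≤ _ := Nat.cast_sub_le_floor_mul (by omega) (Finset.card_le_univ T)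
        (by simpa using hcard)
end

section
/- For the graph G_{t,ω} (t ≥ 2, ω ≥ 3), the local metric dimension of G_{t,ω} equals t(ω−2). -/
open SimpleGraph

variable {V : Type*} [Fintype V] [DecidableEq V]

/-- The graph obtained from `t` disjoint copies of `K_ω` by identifying one chosen
vertex of each copy into a single vertex `none`. The vertex `some (i, j)` is the
`j`-th non-hub vertex of the `i`-th copy. -/
def Gtw (t ω : ℕ) : SimpleGraph (Option (Fin t × Fin (ω - 1))) where
  Adj a b := a ≠ b ∧ ∀ p q, a = some p → b = some q → p.1 = q.1
  symm := by
    constructor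
    rintro a b ⟨h1, h2⟩
    exact ⟨h1.symm, fun p q hp hq => (h2 q p hq hp).symm⟩
  loopless := by
    constructor
    rintro a ⟨h, -⟩
    exact h rfl

/-!
Two non-hub vertices of the same copy of `K_ω` are adjacent true twins, so a local resolving set
misses at most one of them in each copy: it has at least `t(ω - 1) - t` elements. Conversely, keep
all non-hub vertices but one per copy. The only adjacent pairs left outside are the hub and an
omitted vertex `x`, and a kept vertex of another copy (one exists as `t ≥ 2` and `ω ≥ 3`) is at
distance `1` from the hub but `2` from `x`.
-/

open Finset

section LocalResolving

variable {α : Type*} {G : SimpleGraph α}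

lemma isLocalResolving_univ [Fintype α] : IsLocalResolving G univ :=
  fun _ _ _ hu => absurd (mem_univ _) hu

lemma dimL_le_card {S : Finset α} (hS : IsLocalResolving G S) : dimL G ≤ S.card :=
  Nat.sInf_le ⟨S, rfl, hS⟩

lemma le_dimL [Fintype α] {k : ℕ} (h : ∀ S, IsLocalResolving G S → k ≤ S.card) : k ≤ dimL G := by
  obtain ⟨S, hcard, hS⟩ := Nat.sInf_mem (s := {k | ∃ S : Finset α, S.card = k ∧
    IsLocalResolving G S}) ⟨_, univ, rfl, isLocalResolving_univ⟩
  exact (h S hS).trans_eq hcard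

lemma IsLocalResolving.mem_or_mem {S : Finset α} (hS : IsLocalResolving G S) {u v : α}
    (huv : G.Adj u v) (h : ∀ w, w ≠ u → w ≠ v → G.dist u w = G.dist v w) : u ∈ S ∨ v ∈ S := by
  by_contra! ⟨hu, hv⟩
  obtain ⟨w, hwS, hw⟩ := hS u v huv hu hv
  exact hw (h w (ne_of_mem_of_not_mem hwS hu) (ne_of_mem_of_not_mem hwS hv))

end LocalResolving

namespace Gtw

variable {t ω : ℕ}

lemma adj_none_some (p : Fin t × Fin (ω - 1)) : (Gtw t ω).Adj none (some p) :=
  ⟨by simp, by simp⟩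

lemma adj_some_some {p q : Fin t × Fin (ω - 1)} (hpq : p ≠ q) (h : p.1 = q.1) :
    (Gtw t ω).Adj (some p) (some q) :=
  ⟨by simpa using hpq, by rintro _ _ ⟨⟩ ⟨⟩; exact h⟩

lemma dist_none_some (p : Fin t × Fin (ω - 1)) : (Gtw t ω).dist none (some p) = 1 :=
  dist_eq_one_iff_adj.mpr (adj_none_some p)

lemma dist_some_none (p : Fin t × Fin (ω - 1)) : (Gtw t ω).dist (some p) none = 1 :=
  dist_eq_one_iff_adj.mpr (adj_none_some p).symm

lemma dist_some_some_of_fst_eq {p q : Fin t × Fin (ω - 1)} (hpq : p ≠ q) (h : p.1 = q.1) :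
    (Gtw t ω).dist (some p) (some q) = 1 :=
  dist_eq_one_iff_adj.mpr (adj_some_some hpq h)

lemma dist_some_some_of_fst_ne {p q : Fin t × Fin (ω - 1)} (h : p.1 ≠ q.1) :
    (Gtw t ω).dist (some p) (some q) = 2 := by
  let walk : (Gtw t ω).Walk (some p) (some q) :=
    .cons (adj_none_some p).symm (.cons (adj_none_some q) .nil)
  have hle : (Gtw t ω).dist (some p) (some q) ≤ 2 := dist_le walk
  have hpos : 0 < (Gtw t ω).dist (some p) (some q) :=
    walk.reachable.pos_dist_of_ne (by simpa using fun hpq => h (congrArg Prod.fst hpq))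
  have hne : (Gtw t ω).dist (some p) (some q) ≠ 1 := fun h1 =>
    h ((dist_eq_one_iff_adj.mp h1).2 p q rfl rfl)
  omega

lemma dist_eq_of_fst_eq {p q : Fin t × Fin (ω - 1)} (h : p.1 = q.1) :
    ∀ w, w ≠ some p → w ≠ some q → (Gtw t ω).dist (some p) w = (Gtw t ω).dist (some q) w
  | none, _, _ => by rw [dist_some_none, dist_some_none]
  | some r, hp, hq => by
    have hpr : p ≠ r := fun e => hp (e ▸ rfl)
    have hqr : q ≠ r := fun e => hq (e ▸ rfl)
    by_cases hr : p.1 = r.1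
    · rw [dist_some_some_of_fst_eq hpr hr, dist_some_some_of_fst_eq hqr (h ▸ hr)]
    · rw [dist_some_some_of_fst_ne hr, dist_some_some_of_fst_ne (h ▸ hr)]

lemma card_le_of_isLocalResolving {T : Finset (Option (Fin t × Fin (ω - 1)))}
    (hT : IsLocalResolving (Gtw t ω) T) : t * (ω - 2) ≤ T.card := by
  set inT := univ.filter fun p : Fin t × Fin (ω - 1) => some p ∈ T
  set outT := univ.filter fun p : Fin t × Fin (ω - 1) => some p ∉ T
  have h_inT : inT.card ≤ T.card :=
    card_le_card_of_injOn some (fun p hp => (mem_filter.mp hp).2) (Option.some_injective _).injOn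
  have h_outT : outT.card ≤ t := by
    refine (card_le_card_of_injOn Prod.fst (fun _ _ => mem_univ _) ?_).trans_eq (by simp)
    intro p hp q hq h
    by_contra hpq
    have := hT.mem_or_mem (adj_some_some hpq h) (dist_eq_of_fst_eq h)
    simp_all [outT]
  have h_split : inT.card + outT.card = t * (ω - 1) := by
    simpa using card_filter_add_card_filter_not (s := univ) fun p => some p ∈ T
  have h_mul : t * (ω - 2) = t * (ω - 1) - t := by
    rw [← Nat.mul_sub_one, Nat.sub_sub]
  omega

def resolvingSet (j₀ : Fin (ω - 1)) : Finset (Option (Fin t × Fin (ω - 1))) :=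
  (univ.filter fun p : Fin t × Fin (ω - 1) => p.2 ≠ j₀).map .some

lemma some_mem_resolvingSet {j₀ : Fin (ω - 1)} {p : Fin t × Fin (ω - 1)} :
    some p ∈ resolvingSet j₀ ↔ p.2 ≠ j₀ := by
  simp [resolvingSet]

lemma card_resolvingSet (j₀ : Fin (ω - 1)) : (resolvingSet (t := t) j₀).card = t * (ω - 2) := by
  have h : (univ.filter fun p : Fin t × Fin (ω - 1) => p.2 ≠ j₀) = univ ×ˢ univ.erase j₀ := by
    ext p
    simp
  rw [resolvingSet, card_map, h, card_product, card_erase_of_mem (mem_univ _)]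
  simp [Nat.sub_sub]

lemma isLocalResolving_resolvingSet (ht : 2 ≤ t) {j₀ j₁ : Fin (ω - 1)} (hj : j₁ ≠ j₀) :
    IsLocalResolving (Gtw t ω) (resolvingSet j₀) := by
  have separate_hub : ∀ p : Fin t × Fin (ω - 1),
      ∃ w ∈ resolvingSet j₀, (Gtw t ω).dist none w ≠ (Gtw t ω).dist (some p) w := by
    intro p
    obtain ⟨i', hi'⟩ := Fintype.exists_ne_of_one_lt_card (by rw [Fintype.card_fin]; omega) p.1
    refine ⟨some (i', j₁), some_mem_resolvingSet.mpr hj, ?_⟩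
    rw [dist_none_some, dist_some_some_of_fst_ne (Ne.symm hi')]
    decide
  rintro (_ | p) (_ | q) hadj hu hv
  · exact absurd rfl hadj.1
  · exact separate_hub q
  · obtain ⟨w, hw, hd⟩ := separate_hub p
    exact ⟨w, hw, Ne.symm hd⟩
  · have hp : p.2 = j₀ := not_not.mp (mt some_mem_resolvingSet.mpr hu)
    have hq : q.2 = j₀ := not_not.mp (mt some_mem_resolvingSet.mpr hv)
    exact absurd (congrArg some (Prod.ext (hadj.2 p q rfl rfl) (hp.trans hq.symm))) hadj.1

end Gtw

theorem dimL_Gtw (t ω : ℕ) (ht : 2 ≤ t) (hω : 3 ≤ ω) :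
    dimL (Gtw t ω) = t * (ω - 2) := by
  have hj₀ : 0 < ω - 1 := by omega
  have hj₁ : 1 < ω - 1 := by omega
  have hj : (⟨1, hj₁⟩ : Fin (ω - 1)) ≠ ⟨0, hj₀⟩ := by simp
  apply le_antisymm
  · calc dimL (Gtw t ω) ≤ (Gtw.resolvingSet ⟨0, hj₀⟩).card :=
          dimL_le_card (Gtw.isLocalResolving_resolvingSet ht hj)
      _ = t * (ω - 2) := Gtw.card_resolvingSet _
  · exact le_dimL fun _ => Gtw.card_le_of_isLocalResolving
end

section
/- A finite simple connected graph G satisfies dim_l(G) = n(G) − 1 if and only if G is the complete graph K_{n(G)}. -/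
open SimpleGraph

variable {V : Type*} [Fintype V] [DecidableEq V]

theorem dimL_eq_card_sub_one_iff (G : SimpleGraph V) (hc : G.Connected) :
    dimL G = Fintype.card V - 1 ↔ G = ⊤ := by
  constructor
  · intro h
    by_contra hne
    have hex : ∃ u v : V, u ≠ v ∧ ¬ G.Adj u v := by
      by_contra hall
      push_neg at hall
      apply hne
      ext u v
      simp only [top_adj]
      exact ⟨G.ne_of_adj, fun h' => hall u v h'⟩
    obtain ⟨u, v, huv, hadj⟩ := hex
    set S : Finset V := Finset.univ \ {u, v} with hS
    have hres : IsLocalResolving G S := by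
      intro a b hab ha hb
      simp only [hS, Finset.mem_sdiff, Finset.mem_univ, true_and, not_not,
        Finset.mem_insert, Finset.mem_singleton] at ha hb
      exfalso
      rcases ha with rfl | rfl <;> rcases hb with rfl | rfl
      · exact hab.ne rfl
      · exact hadj hab
      · exact hadj hab.symm
      · exact hab.ne rfl
    have hcard : S.card = Fintype.card V - 2 := by
      rw [hS, Finset.card_sdiff_of_subset (Finset.subset_univ _)]
      simp [huv]
    have hle : dimL G ≤ Fintype.card V - 2 := Nat.sInf_le ⟨S, hcard, hres⟩
    have h2 : 2 ≤ Fintype.card V := Fintype.one_lt_card_iff.mpr ⟨u, v, huv⟩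
    omega
  · rintro rfl
    have hub : ∃ S : Finset V, S.card = Fintype.card V - 1 ∧
        IsLocalResolving (⊤ : SimpleGraph V) S := by
      cases isEmpty_or_nonempty V with
      | inl h =>
        exact ⟨∅, by simp, fun u v _ _ _ => (h.false u).elim⟩
      | inr h =>
        obtain ⟨x⟩ := h
        refine ⟨Finset.univ.erase x, by simp [Finset.card_erase_of_mem], ?_⟩
        intro a b hab ha hb
        simp only [Finset.mem_erase, Finset.mem_univ, and_true, not_not] at ha hb
        exact absurd (ha.trans hb.symm) hab.ne
    refine le_antisymm (Nat.sInf_le ⟨hub.choose, hub.choose_spec⟩) ?_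
    refine le_csInf ⟨Fintype.card V - 1, hub⟩ ?_
    rintro k ⟨S, rfl, hres⟩
    by_contra hlt
    push_neg at hlt
    have hcompl : 2 ≤ Sᶜ.card := by
      have := Finset.card_compl S
      have hle : S.card ≤ Fintype.card V := Finset.card_le_univ S
      omega
    obtain ⟨u, v, hu, hv, huv⟩ := Finset.one_lt_card_iff.mp hcompl
    simp only [Finset.mem_compl] at hu hv
    obtain ⟨w, hw, hd⟩ := hres u v (by simpa using huv) hu hv
    apply hd
    have hwu : u ≠ w := fun h => hu (h ▸ hw)
    have hwv : v ≠ w := fun h => hv (h ▸ hw)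
    rw [dist_eq_one_iff_adj.mpr (by simpa using hwu),
      dist_eq_one_iff_adj.mpr (by simpa using hwv)]
end

section
/- A finite simple connected graph G satisfies dim_l(G) = 1 if and only if G is bipartite. -/
open SimpleGraph

variable {V : Type*} [Fintype V] [DecidableEq V]

omit [Fintype V] [DecidableEq V] in
lemma walk_parity {G : SimpleGraph V} (C : G.Coloring (Fin 2)) {a b : V}
    (p : G.Walk a b) : C a = C b ↔ Even p.length := by
  induction p with
  | nil => simp
  | @cons a c b h p ih =>
    have hne : C a ≠ C c := C.valid h
    have key : ∀ x y z : Fin 2, x ≠ y → (x = z ↔ ¬ y = z) := by decide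
    rw [Walk.length_cons, Nat.even_add_one, ← ih, key _ _ _ hne]

omit [Fintype V] [DecidableEq V] in
lemma dist_parity {G : SimpleGraph V} (hc : G.Connected) (C : G.Coloring (Fin 2))
    (a b : V) : C a = C b ↔ Even (G.dist a b) := by
  obtain ⟨p, hp⟩ := (hc a b).exists_walk_length_eq_dist
  rw [← hp]; exact walk_parity C p

theorem dimL_eq_one_iff_bipartite (G : SimpleGraph V) (hc : G.Connected)
    (h2 : 2 ≤ Fintype.card V) :
    dimL G = 1 ↔ G.Colorable 2 := by
  have hedge : ∃ u v : V, G.Adj u v := by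
    obtain ⟨u, v, hne⟩ := Fintype.exists_pair_of_one_lt_card h2
    obtain ⟨p⟩ := hc u v
    cases p with
    | nil => exact absurd rfl hne
    | cons h _ => exact ⟨_, _, h⟩
  constructor
  · intro h
    have hne : {k | ∃ S : Finset V, S.card = k ∧ IsLocalResolving G S}.Nonempty := by
      by_contra hemp
      rw [Set.not_nonempty_iff_eq_empty] at hemp
      rw [dimL, hemp, Nat.sInf_empty] at h
      exact absurd h one_ne_zero.symm
    have hm := Nat.sInf_mem hne
    rw [← dimL, h] at hm
    obtain ⟨S, hcard, hres⟩ := hm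
    obtain ⟨w, rfl⟩ := Finset.card_eq_one.mp hcard
    refine ⟨Coloring.mk (fun v => (⟨G.dist v w % 2, by omega⟩ : Fin 2)) ?_⟩
    intro u v huv
    simp only [ne_eq, Fin.mk.injEq]
    by_cases hu : u = w
    · subst hu
      have : G.dist v u = 1 := dist_eq_one_iff_adj.mpr huv.symm
      simp [this, SimpleGraph.dist_self]
    · by_cases hv : v = w
      · subst hv
        have : G.dist u v = 1 := dist_eq_one_iff_adj.mpr huv
        simp [this, SimpleGraph.dist_self]
      · obtain ⟨w', hw', hd⟩ := hres u v huv (by simpa) (by simpa)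
        rw [Finset.mem_singleton] at hw'; subst hw'
        have h1 : G.dist u v = 1 := dist_eq_one_iff_adj.mpr huv
        have t1 : G.dist u w' ≤ G.dist u v + G.dist v w' := hc.dist_triangle
        have t2 : G.dist v w' ≤ G.dist v u + G.dist u w' := hc.dist_triangle
        have h1' : G.dist v u = 1 := dist_eq_one_iff_adj.mpr huv.symm
        omega
  · intro hcol
    obtain ⟨C⟩ := hcol
    have hcardpos : 0 < Fintype.card V := by omega
    obtain ⟨w⟩ := Fintype.card_pos_iff.mp hcardpos
    have h1 : (1 : ℕ) ∈ {k | ∃ S : Finset V, S.card = k ∧ IsLocalResolving G S} := by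
      refine ⟨{w}, Finset.card_singleton w, ?_⟩
      intro u v huv _ _
      refine ⟨w, Finset.mem_singleton_self w, ?_⟩
      intro heq
      have key : ∀ x y z : Fin 2, x ≠ y → (x = z ↔ y = z) → False := by decide
      exact key (C u) (C v) (C w) (C.valid huv)
        (by rw [dist_parity hc C u w, dist_parity hc C v w, heq])
    have hle : dimL G ≤ 1 := Nat.sInf_le h1
    have hne0 : dimL G ≠ 0 := by
      intro h0
      rcases (Nat.sInf_eq_zero.mp h0) with hz | hemp
      · obtain ⟨S, hcard, hres⟩ := hz
        rw [Finset.card_eq_zero] at hcard; subst hcard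
        obtain ⟨u, v, huv⟩ := hedge
        obtain ⟨w', hw', -⟩ := hres u v huv (Finset.notMem_empty u) (Finset.notMem_empty v)
        exact absurd hw' (Finset.notMem_empty w')
      · exact absurd h1 (by simp [hemp])
    omega
end

section
/- Every finite simple connected graph G satisfies dim_l(G) ≥ ⌈log₂ ω(G)⌉, where ω(G) is the clique number. -/
open SimpleGraph

variable {V : Type*} [Fintype V] [DecidableEq V]

theorem dimL_ge_clog (G : SimpleGraph V) (hc : G.Connected) :
    Nat.clog 2 G.cliqueNum ≤ dimL G := by
  -- Obtain a local resolving set of size dimL G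
  have hmem : dimL G ∈ {k | ∃ S : Finset V, S.card = k ∧ IsLocalResolving G S} := by
    apply Nat.sInf_mem
    refine ⟨(Finset.univ : Finset V).card, Finset.univ, rfl, ?_⟩
    intro u v _ hu _
    exact absurd (Finset.mem_univ u) hu
  obtain ⟨S, hScard, hSres⟩ := hmem
  -- Obtain a maximum clique
  obtain ⟨t, htc⟩ := G.exists_isNClique_cliqueNum
  -- Suffices: cliqueNum ≤ 2 ^ (dimL G)
  have key : G.cliqueNum ≤ 2 ^ (dimL G) := by
    rcases Nat.eq_zero_or_pos G.cliqueNum with h0 | hpos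
    · simp [h0]
    have htne : t.Nonempty := by
      rw [← Finset.card_pos, htc.card_eq]; exact hpos
    -- distances to a fixed w from clique vertices differ by at most 1
    have hstep : ∀ w : V, ∀ x ∈ t, ∀ y ∈ t,
        G.dist x w ≤ G.dist y w + 1 := by
      intro w x hx y hy
      rcases eq_or_ne x y with rfl | hxy
      · omega
      · have hadj : G.Adj x y := htc.isClique hx hy hxy
        calc G.dist x w ≤ G.dist x y + G.dist y w := hc.dist_triangle
          _ = 1 + G.dist y w := by
              rw [SimpleGraph.dist_eq_one_iff_adj.mpr hadj]
          _ = G.dist y w + 1 := by omega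
    -- minimal distance from the clique to w
    classical
    set m : V → ℕ := fun w => t.inf' htne (fun x => G.dist x w) with hm
    have hrange : ∀ w : V, ∀ x ∈ t, G.dist x w = m w ∨ G.dist x w = m w + 1 := by
      intro w x hx
      obtain ⟨y, hy, hyv⟩ := t.exists_mem_eq_inf' htne (fun x => G.dist x w)
      have h1 : m w ≤ G.dist x w := Finset.inf'_le _ hx
      have h2 : G.dist x w ≤ m w + 1 := by
        rw [hm]; simp only []; rw [hyv]; exact hstep w x hx y hy
      omega
    -- injective encoding into S → Bool
    set f : V → (S → Bool) := fun x w => decide (G.dist x w.1 = m w.1) with hf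
    have hinj : Set.InjOn f t := by
      intro x hx y hy hfxy
      by_contra hxy
      have hadj : G.Adj x y := htc.isClique hx hy hxy
      have hdists : ∀ w ∈ S, G.dist x w = G.dist y w := by
        intro w hw
        have := congrFun hfxy ⟨w, hw⟩
        simp only [hf, decide_eq_decide] at this
        rcases hrange w x hx with h1 | h1 <;> rcases hrange w y hy with h2 | h2 <;>
          omega
      rcases Finset.decidableMem x S with hxS | hxS
      · -- both cases: if x ∈ S use coordinate x
        rcases Finset.decidableMem y S with hyS | hyS
        · obtain ⟨w, hw, hne⟩ := hSres x y hadj hxS hyS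
          exact hne (hdists w hw)
        · have h0 : G.dist y y = 0 := SimpleGraph.dist_self
          have h1 : G.dist x y = 1 := SimpleGraph.dist_eq_one_iff_adj.mpr hadj
          exact absurd (hdists y hyS) (by omega)
      · have h0 : G.dist x x = 0 := SimpleGraph.dist_self
        have h1 : G.dist y x = 1 :=
          SimpleGraph.dist_eq_one_iff_adj.mpr hadj.symm
        exact absurd (hdists x hxS) (by omega)
    have hcard : t.card ≤ Fintype.card (S → Bool) := by
      have := Finset.card_le_card_of_injOn f (fun x _ => Finset.mem_univ (f x))
        (by intro a ha b hb; exact hinj ha hb)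
      simpa [Finset.card_univ] using this
    have : Fintype.card (S → Bool) = 2 ^ S.card := by
      simp [Fintype.card_fun]
    rw [← htc.card_eq, ← hScard]
    omega
  calc Nat.clog 2 G.cliqueNum ≤ Nat.clog 2 (2 ^ dimL G) :=
        Nat.clog_mono_right 2 key
    _ = dimL G := Nat.clog_pow 2 _ one_lt_two
end

section
/- Every finite simple connected graph G satisfies dim_l(G) ≥ n(G) − 2^{n(G)−ω(G)}. -/
open SimpleGraph

variable {V : Type*} [Fintype V] [DecidableEq V]

lemma two_pow_sub_mono {j m : ℕ} (h : j ≤ m) : (2:ℤ)^j - j ≤ 2^m - m := by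
  induction m, h using Nat.le_induction with
  | base => exact le_refl _
  | succ m hm ih =>
    have h1 : (1:ℤ) ≤ 2 ^ m := one_le_pow₀ (by norm_num)
    have h2 : (2:ℤ)^(m+1) = 2 * 2^m := by ring
    push_cast
    linarith

theorem dimL_ge_card_sub_pow (G : SimpleGraph V) (hc : G.Connected) :
    (Fintype.card V : ℤ) - 2 ^ (Fintype.card V - G.cliqueNum) ≤ (dimL G : ℤ) := by
  classical
  have hne : {k | ∃ S : Finset V, S.card = k ∧ IsLocalResolving G S}.Nonempty :=
    ⟨(Finset.univ : Finset V).card, Finset.univ, rfl,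
      fun u v _ hu _ => absurd (Finset.mem_univ u) hu⟩
  obtain ⟨S, hScard, hSres⟩ := Nat.sInf_mem hne
  obtain ⟨K, hK⟩ := G.exists_isNClique_cliqueNum
  -- parity injection
  have hinj : Function.Injective
      (fun u : ↥(K \ S) => fun w : ↥(S \ K) => ((G.dist u.1 w.1 : ZMod 2))) := by
    rintro ⟨u, hu⟩ ⟨v, hv⟩ hf
    simp only [Finset.mem_sdiff] at hu hv
    by_contra hne'
    have huv : u ≠ v := by simpa using hne'
    have hadj : G.Adj u v := hK.isClique hu.1 hv.1 huv
    obtain ⟨w, hwS, hwd⟩ := hSres u v hadj hu.2 hv.2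
    have hwK : w ∉ K := by
      intro hwK
      have h1 : G.dist u w = 1 :=
        SimpleGraph.dist_eq_one_iff_adj.mpr (hK.isClique hu.1 hwK (by rintro rfl; exact hu.2 hwS))
      have h2 : G.dist v w = 1 :=
        SimpleGraph.dist_eq_one_iff_adj.mpr (hK.isClique hv.1 hwK (by rintro rfl; exact hv.2 hwS))
      exact hwd (h1.trans h2.symm)
    have hd1 : G.dist u v = 1 := SimpleGraph.dist_eq_one_iff_adj.mpr hadj
    have hd2 : G.dist v u = 1 := SimpleGraph.dist_eq_one_iff_adj.mpr hadj.symm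
    have h3 : G.dist u w ≤ G.dist u v + G.dist v w := hc.dist_triangle
    have h4 : G.dist v w ≤ G.dist v u + G.dist u w := hc.dist_triangle
    have h5 := congrFun hf ⟨w, Finset.mem_sdiff.mpr ⟨hwS, hwK⟩⟩
    simp only [ZMod.natCast_eq_natCast_iff'] at h5
    omega
  have hcard := Fintype.card_le_of_injective _ hinj
  rw [Fintype.card_coe, Fintype.card_fun, Fintype.card_coe, ZMod.card] at hcard
  -- counting
  set n := Fintype.card V
  set a := (K \ S).card
  set b := (S \ K).card
  set s := (K ∩ S).card
  have hKcard : a + s = K.card := Finset.card_sdiff_add_card_inter K S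
  have hScard' : b + s = S.card := by
    have h := Finset.card_sdiff_add_card_inter S K
    rwa [Finset.inter_comm S K] at h
  have hωn : K.card ≤ n := Finset.card_le_univ K
  have hbm : b + K.card ≤ n := by
    have : ((S \ K) ∪ K).card ≤ n := Finset.card_le_univ _
    rwa [Finset.card_union_of_disjoint (Finset.sdiff_disjoint)] at this
  have hω : K.card = G.cliqueNum := hK.card_eq
  have hkk : S.card = dimL G := hScard
  -- final arithmetic in ℤ
  have hmono : (2:ℤ)^b - b ≤ 2^(n - G.cliqueNum) - (n - G.cliqueNum : ℕ) :=
    two_pow_sub_mono (by omega)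
  have hcast : ((n - G.cliqueNum : ℕ) : ℤ) = (n : ℤ) - G.cliqueNum := by
    have : G.cliqueNum ≤ n := by omega
    push_cast [this]; ring
  have ha : (a : ℤ) ≤ 2 ^ b := by exact_mod_cast hcard
  have e1 : (a : ℤ) + s = G.cliqueNum := by exact_mod_cast hω ▸ hKcard
  have e2 : (b : ℤ) + s = dimL G := by exact_mod_cast hkk ▸ hScard'
  rw [hcast] at hmono
  linarith
end
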